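/- arXiv:0910.5451 — 2 statements merged into one kernel-verified Lean document; each statement's English description precedes it below -/
import Mathlib

section
/- Let N ≥ 1 and let f : B^N → B^N be holomorphic. Assume there exist p ∈ ∂B^N and c ∈ (0,1) such that f(H(p,R)) ⊆ H(p,cR) for every R > 0. Let {Z_n}_{n≥0} be a backward-iteration sequence for f and a ∈ (0,1) with d(Z_n, Z_{n+1}) ≤ a for all n. Then there exist q ∈ ∂B^N with q ≠ p and M > 1 such that Z_n → q as n → ∞ and Z_n ∈ K(q,M) for every n, i.e. the sequence stays in a Koranyi region with vertex q. -/
noncomputable section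

open Filter Topology

/-- The open unit ball `B^N = {Z ∈ ℂ^N : ‖Z‖ < 1}`. -/
def unitBall (N : ℕ) : Set (EuclideanSpace ℂ (Fin N)) := {Z | ‖Z‖ < 1}

/-- The Hermitian inner product `⟨Z,W⟩ = Σ_j Z_j * conj (W_j)` of the paper
(which is `inner W Z` in Mathlib's conjugate-linear-in-the-first-slot convention). -/
def hip {N : ℕ} (Z W : EuclideanSpace ℂ (Fin N)) : ℂ := inner ℂ W Z

/-- The pseudo-hyperbolic distance on the unit ball `B^N`:
the number `d(Z,W) ∈ [0,1)` with `d(Z,W)² = 1 − (1−‖Z‖²)(1−‖W‖²)/|1−⟨Z,W⟩|²`. -/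
def phd {N : ℕ} (Z W : EuclideanSpace ℂ (Fin N)) : ℝ :=
  Real.sqrt (1 - (1 - ‖Z‖ ^ 2) * (1 - ‖W‖ ^ 2) / ‖(1 : ℂ) - hip Z W‖ ^ 2)

/-- The horosphere `H(X,R) = {Z ∈ B^N : |1−⟨Z,X⟩|² < R(1−‖Z‖²)}`. -/
def horo {N : ℕ} (X : EuclideanSpace ℂ (Fin N)) (R : ℝ) :
    Set (EuclideanSpace ℂ (Fin N)) :=
  {Z | ‖Z‖ < 1 ∧ ‖(1 : ℂ) - hip Z X‖ ^ 2 < R * (1 - ‖Z‖ ^ 2)}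

/-- The Koranyi region `K(q,M) = {Z ∈ B^N : |1−⟨Z,q⟩| < M(1−‖Z‖)}`. -/
def koranyi {N : ℕ} (q : EuclideanSpace ℂ (Fin N)) (M : ℝ) :
    Set (EuclideanSpace ℂ (Fin N)) :=
  {Z | ‖Z‖ < 1 ∧ ‖(1 : ℂ) - hip Z q‖ < M * (1 - ‖Z‖)}

/-!
Along the backward orbit the horosphere level `u_k = |1 - ⟨Z_k, p⟩|² / (1 - ‖Z_k‖²)` grows like
`c⁻ᵏ`, so `1 - ‖Z_k‖² ≤ 4 cᵏ / u_0` decays geometrically, and bounded pseudo-hyperbolic steps give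
`|1 - ⟨Z_{k+j}, Z_{k+j+1}⟩| = O(cʲ / u_k)`. As `√|1 - ⟨Z, W⟩|` obeys the triangle inequality on the
closed ball, summing this tail shows that `Z_k` converges to some `q ∈ ∂B^N` with
`|1 - ⟨Z_k, q⟩| = O(1 / u_k) = O((1 - ‖Z_k‖) / |1 - ⟨Z_k, p⟩|²)`: a Korányi-region bound as soon as
`q ≠ p`. If `q = p`, the same tail estimate improves any geometric decay rate `r` of
`1 - ‖Z_k‖²` to `c r`, which is impossible because a step of pseudo-hyperbolic length at most `a`
shrinks `1 - ‖Z_k‖²` by at most the factor `(1 - a²) / 4`.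
-/

section Gauge

variable {N : ℕ} {Z V W : EuclideanSpace ℂ (Fin N)}

variable (Z W) in
lemma norm_sub_sq_eq_sub_re_hip :
    ‖Z - W‖ ^ 2 = ‖Z‖ ^ 2 + ‖W‖ ^ 2 - 2 * (hip Z W).re := by
  rw [norm_sub_sq (𝕜 := ℂ), inner_re_symm]
  simp only [hip, RCLike.re_to_complex]
  ring

variable (Z W) in
lemma norm_one_sub_hip_comm :
    ‖(1 : ℂ) - hip Z W‖ = ‖(1 : ℂ) - hip W Z‖ := by
  rw [hip, hip, ← inner_conj_symm W Z, ← Complex.norm_conj, map_sub, map_one, Complex.conj_conj]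

variable (Z W) in
lemma one_sub_norm_mul_norm_le_norm_one_sub_hip :
    1 - ‖Z‖ * ‖W‖ ≤ ‖(1 : ℂ) - hip Z W‖ := by
  have h := norm_sub_norm_le (1 : ℂ) (hip Z W)
  have hZW : ‖hip Z W‖ ≤ ‖W‖ * ‖Z‖ := norm_inner_le_norm W Z
  rw [norm_one] at h
  linarith

lemma norm_one_sub_hip_le_two (hZ : ‖Z‖ ≤ 1) (hW : ‖W‖ ≤ 1) : ‖(1 : ℂ) - hip Z W‖ ≤ 2 := by
  have h := norm_sub_le (1 : ℂ) (hip Z W)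
  have hZW : ‖hip Z W‖ ≤ ‖W‖ * ‖Z‖ := norm_inner_le_norm W Z
  rw [norm_one] at h
  nlinarith [norm_nonneg W, norm_nonneg Z]

lemma norm_sub_sq_le (hZ : ‖Z‖ ≤ 1) (W : EuclideanSpace ℂ (Fin N)) :
    ‖Z - W‖ ^ 2 ≤ 2 * ‖(1 : ℂ) - hip Z W‖ - (1 - ‖W‖ ^ 2) := by
  have h := Complex.re_le_norm ((1 : ℂ) - hip Z W)
  rw [Complex.sub_re, Complex.one_re] at h
  rw [norm_sub_sq_eq_sub_re_hip]
  nlinarith [norm_nonneg Z]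

lemma add_mul_le_two_mul {s y z α β : ℝ} (hs : 0 ≤ s) (hy : 0 ≤ y) (hz : 0 ≤ z)
    (hα : 0 ≤ α) (hβ : 0 ≤ β) (hyα : y ^ 2 ≤ 2 * α ^ 2 - s) (hzβ : z ^ 2 ≤ 2 * β ^ 2 - s) :
    s + y * z ≤ 2 * α * β := by
  have hs2 : s * s ≤ (2 * α ^ 2) * (2 * β ^ 2) :=
    mul_le_mul (by nlinarith) (by nlinarith) hs (by positivity)
  have hsαβ : s ≤ 2 * α * β :=
    (pow_le_pow_iff_left₀ hs (by positivity) two_ne_zero).1 (by nlinarith)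
  have hyz : (y * z) ^ 2 ≤ (2 * α * β - s) ^ 2 := by
    nlinarith [mul_le_mul hyα hzβ (sq_nonneg z) ((sq_nonneg y).trans hyα),
      mul_nonneg hs (sq_nonneg (α - β))]
  have := (pow_le_pow_iff_left₀ (by positivity) (by linarith) two_ne_zero).1 hyz
  linarith

lemma norm_one_sub_hip_ne_zero (hZ : ‖Z‖ ≤ 1) (hW : ‖W‖ ≤ 1) (hZW : Z ≠ W) :
    ‖(1 : ℂ) - hip Z W‖ ≠ 0 := by
  intro h0
  have hsq := norm_sub_sq_le hZ W
  rw [h0] at hsq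
  refine hZW (sub_eq_zero.1 (norm_eq_zero.1 ?_))
  nlinarith [norm_nonneg (Z - W), norm_nonneg W]

/-- On the unit sphere this is the triangle inequality for the Korányi distance. -/
lemma sqrt_norm_one_sub_hip_le_add (hZ : ‖Z‖ ≤ 1) (hV : ‖V‖ ≤ 1) (hW : ‖W‖ ≤ 1) :
    √‖(1 : ℂ) - hip Z W‖ ≤ √‖(1 : ℂ) - hip Z V‖ + √‖(1 : ℂ) - hip V W‖ := by
  set A := ‖(1 : ℂ) - hip Z V‖
  set B := ‖(1 : ℂ) - hip V W‖
  set s := 1 - ‖V‖ ^ 2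
  have hs : 0 ≤ s := by nlinarith [norm_nonneg V]
  have hid : (1 : ℂ) - hip Z W =
      ((1 : ℂ) - hip Z V) + ((1 : ℂ) - hip V W) - (s : ℂ) - hip (Z - V) (W - V) := by
    have hVV : hip V V = (‖V‖ : ℂ) ^ 2 := by simp [hip, inner_self_eq_norm_sq_to_K]
    simp only [hip] at hVV ⊢
    simp only [s, inner_sub_left, inner_sub_right, hVV]
    push_cast
    ring
  have hsum : ‖(1 : ℂ) - hip Z W‖ ≤ A + B + s + ‖Z - V‖ * ‖W - V‖ := by
    rw [hid]
    have h1 := norm_sub_le (((1 : ℂ) - hip Z V) + ((1 : ℂ) - hip V W) - (s : ℂ))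
      (hip (Z - V) (W - V))
    have h2 := norm_sub_le (((1 : ℂ) - hip Z V) + ((1 : ℂ) - hip V W)) (s : ℂ)
    have h3 := norm_add_le ((1 : ℂ) - hip Z V) ((1 : ℂ) - hip V W)
    have h4 : ‖hip (Z - V) (W - V)‖ ≤ ‖W - V‖ * ‖Z - V‖ := norm_inner_le_norm _ _
    rw [Complex.norm_real, Real.norm_of_nonneg hs] at h2
    linarith
  have hZV : ‖Z - V‖ ^ 2 ≤ 2 * √A ^ 2 - s := by
    rw [Real.sq_sqrt (norm_nonneg _)]; exact norm_sub_sq_le hZ V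
  have hWV : ‖W - V‖ ^ 2 ≤ 2 * √B ^ 2 - s := by
    rw [Real.sq_sqrt (norm_nonneg _), norm_one_sub_hip_comm]; exact norm_sub_sq_le hW V
  have hcross := add_mul_le_two_mul hs (norm_nonneg _) (norm_nonneg _) (Real.sqrt_nonneg A)
    (Real.sqrt_nonneg B) hZV hWV
  rw [Real.sqrt_le_left (by positivity), add_sq, Real.sq_sqrt (norm_nonneg _),
    Real.sq_sqrt (norm_nonneg _)]
  linarith

end Gauge

lemma Real.sqrt_mul_pow {C r : ℝ} (hC : 0 ≤ C) (hr : 0 ≤ r) (j : ℕ) :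
    √(C * r ^ j) = √C * √r ^ j := by
  rw [Real.sqrt_mul hC, show r ^ j = (√r ^ j) ^ 2 by
    rw [← pow_mul, mul_comm, pow_mul, Real.sq_sqrt hr], Real.sqrt_sq (by positivity)]

section Chain

variable {N : ℕ} {Z : ℕ → EuclideanSpace ℂ (Fin N)} {q : EuclideanSpace ℂ (Fin N)} {C r : ℝ}

lemma sqrt_norm_one_sub_hip_le_of_le_geometric (hZ : ∀ j, ‖Z j‖ ≤ 1) (hr0 : 0 ≤ r)
    (hr1 : r < 1) (h : ∀ j, √‖(1 : ℂ) - hip (Z j) (Z (j + 1))‖ ≤ C * r ^ j)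
    (hq : Tendsto Z atTop (𝓝 q)) :
    √‖(1 : ℂ) - hip (Z 0) q‖ ≤ C / (1 - r) := by
  have hC : 0 ≤ C := by simpa using (Real.sqrt_nonneg _).trans (h 0)
  have hpartial : ∀ m, √‖(1 : ℂ) - hip (Z 0) (Z (m + 1))‖ ≤
      ∑ j ∈ Finset.range (m + 1), C * r ^ j := by
    intro m
    induction m with
    | zero => simpa using h 0
    | succ m ih =>
      rw [Finset.sum_range_succ]
      exact (sqrt_norm_one_sub_hip_le_add (hZ 0) (hZ (m + 1)) (hZ (m + 2))).trans
        (add_le_add ih (h (m + 1)))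
  have hgeom : ∀ m, ∑ j ∈ Finset.range m, C * r ^ j ≤ C / (1 - r) := fun m => by
    rw [← Finset.mul_sum, ← mul_one_div, Finset.range_eq_Ico]
    exact mul_le_mul_of_nonneg_left
      (by simpa using geom_sum_Ico_le_of_lt_one (m := 0) (n := m) hr0 hr1) hC
  have hcont : Continuous fun W => √‖(1 : ℂ) - hip (Z 0) W‖ := by
    unfold hip; fun_prop
  exact le_of_tendsto ((hcont.tendsto q).comp (hq.comp (tendsto_add_atTop_nat 1)))
    (Eventually.of_forall fun m => (hpartial m).trans (hgeom _))

lemma norm_one_sub_hip_le_of_le_geometric (hZ : ∀ j, ‖Z j‖ ≤ 1) (hr0 : 0 ≤ r)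
    (hr1 : r < 1) (h : ∀ j, ‖(1 : ℂ) - hip (Z j) (Z (j + 1))‖ ≤ C * r ^ j)
    (hq : Tendsto Z atTop (𝓝 q)) :
    ‖(1 : ℂ) - hip (Z 0) q‖ ≤ C / (1 - √r) ^ 2 := by
  have hC : 0 ≤ C := by simpa using (norm_nonneg _).trans (h 0)
  have hsqrt := sqrt_norm_one_sub_hip_le_of_le_geometric hZ (Real.sqrt_nonneg r)
    ((Real.sqrt_lt' one_pos).2 (by simpa using hr1))
    (fun j => (Real.sqrt_le_sqrt (h j)).trans_eq (Real.sqrt_mul_pow hC hr0 j)) hq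
  calc ‖(1 : ℂ) - hip (Z 0) q‖ = √‖(1 : ℂ) - hip (Z 0) q‖ ^ 2 :=
        (Real.sq_sqrt (norm_nonneg _)).symm
    _ ≤ (√C / (1 - √r)) ^ 2 := pow_le_pow_left₀ (Real.sqrt_nonneg _) hsqrt 2
    _ = C / (1 - √r) ^ 2 := by rw [div_pow, Real.sq_sqrt hC]

lemma cauchySeq_of_norm_one_sub_hip_le_geometric (hZ : ∀ j, ‖Z j‖ ≤ 1) (hr0 : 0 ≤ r)
    (hr1 : r < 1) (h : ∀ j, ‖(1 : ℂ) - hip (Z j) (Z (j + 1))‖ ≤ C * r ^ j) :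
    CauchySeq Z := by
  have hC : 0 ≤ C := by simpa using (norm_nonneg _).trans (h 0)
  refine cauchySeq_of_le_geometric (√r) (√(2 * C))
    ((Real.sqrt_lt' one_pos).2 (by simpa using hr1)) fun j => ?_
  rw [dist_eq_norm, ← Real.sqrt_mul_pow (by positivity) hr0,
    Real.le_sqrt (norm_nonneg _) (by positivity)]
  nlinarith [norm_sub_sq_le (hZ j) (Z (j + 1)), h j, hZ (j + 1), norm_nonneg (Z (j + 1))]

end Chain

lemma le_pow_mul_of_le_mul_succ {u : ℕ → ℝ} {c : ℝ} (hc : 0 ≤ c) (h : ∀ k, u k ≤ c * u (k + 1))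
    (k j : ℕ) : u k ≤ c ^ j * u (j + k) := by
  induction j with
  | zero => simp
  | succ j ih =>
    calc u k ≤ c ^ j * u (j + k) := ih
      _ ≤ c ^ j * (c * u (j + k + 1)) := mul_le_mul_of_nonneg_left (h _) (pow_nonneg hc j)
      _ = c ^ (j + 1) * u (j + 1 + k) := by rw [pow_succ, Nat.add_right_comm]; ring

section Horosphere

variable {N : ℕ} {p Z W : EuclideanSpace ℂ (Fin N)}

def horoLevel (p Z : EuclideanSpace ℂ (Fin N)) : ℝ :=
  ‖(1 : ℂ) - hip Z p‖ ^ 2 / (1 - ‖Z‖ ^ 2)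

lemma one_sub_norm_sq_pos (hZ : ‖Z‖ < 1) : 0 < 1 - ‖Z‖ ^ 2 := by
  nlinarith [norm_nonneg Z]

lemma mem_horo_iff (hZ : ‖Z‖ < 1) {R : ℝ} : Z ∈ horo p R ↔ horoLevel p Z < R := by
  change _ ∧ _ ↔ _
  rw [horoLevel, div_lt_iff₀ (one_sub_norm_sq_pos hZ)]
  exact and_iff_right hZ

lemma horoLevel_mul_one_sub_norm_sq (hZ : ‖Z‖ < 1) :
    horoLevel p Z * (1 - ‖Z‖ ^ 2) = ‖(1 : ℂ) - hip Z p‖ ^ 2 :=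
  div_mul_cancel₀ _ (one_sub_norm_sq_pos hZ).ne'

lemma horoLevel_pos (hZ : ‖Z‖ < 1) (hp : ‖p‖ ≤ 1) : 0 < horoLevel p Z := by
  have h := one_sub_norm_mul_norm_le_norm_one_sub_hip Z p
  have hZp : ‖Z‖ * ‖p‖ < 1 := by nlinarith [norm_nonneg Z, norm_nonneg p]
  exact div_pos (pow_pos (by linarith) 2) (one_sub_norm_sq_pos hZ)

lemma horoLevel_apply_le {f : EuclideanSpace ℂ (Fin N) → EuclideanSpace ℂ (Fin N)} {c : ℝ}
    (hf : ∀ R : ℝ, 0 < R → f '' horo p R ⊆ horo p (c * R)) (hc : 0 < c) (hW : ‖W‖ < 1) :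
    horoLevel p (f W) ≤ c * horoLevel p W := by
  rw [← div_le_iff₀' hc]
  refine le_of_forall_gt_imp_ge_of_dense fun R hR => ?_
  have hR0 : 0 < R := (div_nonneg (sq_nonneg _) (one_sub_norm_sq_pos hW).le).trans_lt hR
  have hfW := hf R hR0 ⟨W, (mem_horo_iff hW).2 hR, rfl⟩
  rw [mem_horo_iff hfW.1] at hfW
  rw [div_le_iff₀' hc]
  exact hfW.le

end Horosphere

section PseudoHyperbolic

variable {N : ℕ} {Z W : EuclideanSpace ℂ (Fin N)} {a : ℝ}

lemma one_sub_sq_mul_norm_one_sub_hip_sq_le (hZ : ‖Z‖ < 1) (hW : ‖W‖ < 1) (h : phd Z W ≤ a) :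
    (1 - a ^ 2) * ‖(1 : ℂ) - hip Z W‖ ^ 2 ≤ (1 - ‖Z‖ ^ 2) * (1 - ‖W‖ ^ 2) := by
  have hA : 0 < ‖(1 : ℂ) - hip Z W‖ := by
    nlinarith [one_sub_norm_mul_norm_le_norm_one_sub_hip Z W, norm_nonneg Z, norm_nonneg W]
  have ha := (Real.sqrt_le_iff.1 h).2
  rw [sub_le_iff_le_add, ← sub_le_iff_le_add', le_div_iff₀ (by positivity)] at ha
  exact ha

lemma one_sub_sq_mul_norm_one_sub_hip_le (hZ : ‖Z‖ < 1) (hW : ‖W‖ < 1) (h : phd Z W ≤ a)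
    (ha : a < 1) {b : ℝ} (hZb : 1 - ‖Z‖ ^ 2 ≤ b) (hWb : 1 - ‖W‖ ^ 2 ≤ b) :
    (1 - a ^ 2) * ‖(1 : ℂ) - hip Z W‖ ≤ b := by
  have ha0 : 0 ≤ a := (Real.sqrt_nonneg _).trans h
  have hsq := one_sub_sq_mul_norm_one_sub_hip_sq_le hZ hW h
  have hZ0 := one_sub_norm_sq_pos hZ
  have hW0 := one_sub_norm_sq_pos hW
  have hprod : (1 - ‖Z‖ ^ 2) * (1 - ‖W‖ ^ 2) ≤ b ^ 2 := by nlinarith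
  have hσ : 0 ≤ 1 - a ^ 2 := by nlinarith
  refine (pow_le_pow_iff_left₀ (by positivity) (by linarith) two_ne_zero).1 ?_
  nlinarith [mul_le_mul_of_nonneg_left hsq hσ, norm_nonneg ((1 : ℂ) - hip Z W)]

lemma one_sub_norm_sq_le_of_phd_le (hZ : ‖Z‖ < 1) (hW : ‖W‖ < 1) (h : phd Z W ≤ a)
    (ha : a < 1) : 1 - ‖Z‖ ^ 2 ≤ 4 / (1 - a ^ 2) * (1 - ‖W‖ ^ 2) := by
  have ha0 : 0 ≤ a := (Real.sqrt_nonneg _).trans h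
  have hσ : 0 < 1 - a ^ 2 := by nlinarith
  have hsq := one_sub_sq_mul_norm_one_sub_hip_sq_le hZ hW h
  have hA := one_sub_norm_mul_norm_le_norm_one_sub_hip Z W
  have hZ0 := one_sub_norm_sq_pos hZ
  have hhalf : (1 - ‖Z‖ ^ 2) / 2 ≤ ‖(1 : ℂ) - hip Z W‖ := by
    nlinarith [norm_nonneg Z, norm_nonneg W, mul_le_mul_of_nonneg_left hW.le (norm_nonneg Z)]
  rw [div_mul_eq_mul_div, le_div_iff₀ hσ]
  nlinarith [mul_le_mul_of_nonneg_left (pow_le_pow_left₀ (by positivity) hhalf 2) hσ.le]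

end PseudoHyperbolic

structure IsJuliaBackwardOrbit {N : ℕ} (p : EuclideanSpace ℂ (Fin N)) (c a : ℝ)
    (Z : ℕ → EuclideanSpace ℂ (Fin N)) : Prop where
  norm_lt_one : ∀ k, ‖Z k‖ < 1
  norm_p_le_one : ‖p‖ ≤ 1
  c_pos : 0 < c
  c_lt_one : c < 1
  a_lt_one : a < 1
  horoLevel_le : ∀ k, horoLevel p (Z k) ≤ c * horoLevel p (Z (k + 1))
  phd_le : ∀ k, phd (Z k) (Z (k + 1)) ≤ a

namespace IsJuliaBackwardOrbit

variable {N : ℕ} {p q : EuclideanSpace ℂ (Fin N)} {c a : ℝ} {Z : ℕ → EuclideanSpace ℂ (Fin N)}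

lemma norm_le_one (h : IsJuliaBackwardOrbit p c a Z) (k : ℕ) : ‖Z k‖ ≤ 1 := (h.norm_lt_one k).le

lemma one_sub_sq_pos (h : IsJuliaBackwardOrbit p c a Z) : 0 < 1 - a ^ 2 := by
  have ha0 : 0 ≤ a := (Real.sqrt_nonneg _).trans (h.phd_le 0)
  nlinarith [h.a_lt_one]

lemma one_sub_norm_sq_mul_horoLevel_le (h : IsJuliaBackwardOrbit p c a Z) (k j : ℕ) :
    (1 - ‖Z (j + k)‖ ^ 2) * horoLevel p (Z k) ≤ 4 * c ^ j := by
  have hlevel := le_pow_mul_of_le_mul_succ h.c_pos.le h.horoLevel_le k j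
  have hmul := horoLevel_mul_one_sub_norm_sq (p := p) (h.norm_lt_one (j + k))
  have htwo := norm_one_sub_hip_le_two (h.norm_le_one (j + k)) h.norm_p_le_one
  calc (1 - ‖Z (j + k)‖ ^ 2) * horoLevel p (Z k)
      ≤ (1 - ‖Z (j + k)‖ ^ 2) * (c ^ j * horoLevel p (Z (j + k))) :=
        mul_le_mul_of_nonneg_left hlevel (one_sub_norm_sq_pos (h.norm_lt_one _)).le
    _ = c ^ j * ‖(1 : ℂ) - hip (Z (j + k)) p‖ ^ 2 := by rw [← hmul]; ring
    _ ≤ c ^ j * 2 ^ 2 := by gcongr; exact pow_nonneg h.c_pos.le j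
    _ = 4 * c ^ j := by ring

lemma norm_one_sub_hip_succ_le (h : IsJuliaBackwardOrbit p c a Z) (k j : ℕ) :
    ‖(1 : ℂ) - hip (Z (j + k)) (Z (j + 1 + k))‖ ≤
      4 / ((1 - a ^ 2) * horoLevel p (Z k)) * c ^ j := by
  have hu := horoLevel_pos (h.norm_lt_one k) h.norm_p_le_one
  have hb (i : ℕ) : 1 - ‖Z (i + k)‖ ^ 2 ≤ 4 * c ^ i / horoLevel p (Z k) := by
    rw [le_div_iff₀ hu]; exact h.one_sub_norm_sq_mul_horoLevel_le k i
  have hc : c ^ (j + 1) ≤ c ^ j := pow_le_pow_of_le_one h.c_pos.le h.c_lt_one.le j.le_succ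
  have hstep := one_sub_sq_mul_norm_one_sub_hip_le (h.norm_lt_one _) (h.norm_lt_one _)
    (h.phd_le (j + k)) h.a_lt_one (hb j)
    (Nat.add_right_comm j 1 k ▸ (hb (j + 1)).trans (by gcongr))
  rw [le_div_iff₀ hu] at hstep
  rw [Nat.add_right_comm j 1 k, div_mul_eq_mul_div, le_div_iff₀ (mul_pos h.one_sub_sq_pos hu)]
  linarith

lemma cauchySeq (h : IsJuliaBackwardOrbit p c a Z) : CauchySeq Z :=
  cauchySeq_of_norm_one_sub_hip_le_geometric h.norm_le_one h.c_pos.le h.c_lt_one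
    fun j => by simpa using h.norm_one_sub_hip_succ_le 0 j

lemma norm_eq_one_of_tendsto (h : IsJuliaBackwardOrbit p c a Z) (hq : Tendsto Z atTop (𝓝 q)) :
    ‖q‖ = 1 := by
  have hu := horoLevel_pos (h.norm_lt_one 0) h.norm_p_le_one
  have hbound (k : ℕ) : 1 - ‖Z k‖ ^ 2 ≤ 4 / horoLevel p (Z 0) * c ^ k := by
    rw [div_mul_eq_mul_div, le_div_iff₀ hu]; exact h.one_sub_norm_sq_mul_horoLevel_le 0 k
  have hgeom := (tendsto_pow_atTop_nhds_zero_of_lt_one h.c_pos.le h.c_lt_one).const_mul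
    (4 / horoLevel p (Z 0))
  rw [mul_zero] at hgeom
  have hzero : Tendsto (fun k => 1 - ‖Z k‖ ^ 2) atTop (𝓝 0) :=
    squeeze_zero (fun k => (one_sub_norm_sq_pos (h.norm_lt_one k)).le) hbound hgeom
  have hlim := tendsto_nhds_unique (tendsto_const_nhds.sub (hq.norm.pow 2)) hzero
  nlinarith [norm_nonneg q]

lemma norm_one_sub_hip_mul_horoLevel_le (h : IsJuliaBackwardOrbit p c a Z)
    (hq : Tendsto Z atTop (𝓝 q)) (k : ℕ) :
    ‖(1 : ℂ) - hip (Z k) q‖ * horoLevel p (Z k) ≤ 4 / ((1 - a ^ 2) * (1 - √c) ^ 2) := by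
  have hu := horoLevel_pos (h.norm_lt_one k) h.norm_p_le_one
  have htail := norm_one_sub_hip_le_of_le_geometric (fun j => h.norm_le_one (j + k))
    h.c_pos.le h.c_lt_one (h.norm_one_sub_hip_succ_le k) ((tendsto_add_atTop_iff_nat k).2 hq)
  rw [zero_add] at htail
  calc ‖(1 : ℂ) - hip (Z k) q‖ * horoLevel p (Z k)
      ≤ 4 / ((1 - a ^ 2) * horoLevel p (Z k)) / (1 - √c) ^ 2 * horoLevel p (Z k) :=
        mul_le_mul_of_nonneg_right htail hu.le
    _ = 4 / ((1 - a ^ 2) * (1 - √c) ^ 2) := by field_simp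

lemma exists_one_sub_norm_sq_le_mul_pow (h : IsJuliaBackwardOrbit p c a Z)
    (hp : Tendsto Z atTop (𝓝 p)) {B r : ℝ} (hr0 : 0 ≤ r) (hr1 : r < 1)
    (hB : ∀ k, 1 - ‖Z k‖ ^ 2 ≤ B * r ^ k) :
    ∃ B' : ℝ, ∀ k, 1 - ‖Z k‖ ^ 2 ≤ B' * (c * r) ^ k := by
  have hσ := h.one_sub_sq_pos
  have hB0 : 0 ≤ B := by simpa using (one_sub_norm_sq_pos (h.norm_lt_one 0)).le.trans (hB 0)
  have hstep (k j : ℕ) : ‖(1 : ℂ) - hip (Z (j + k)) (Z (j + 1 + k))‖ ≤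
      B * r ^ k / (1 - a ^ 2) * r ^ j := by
    have hr : r ^ (j + 1 + k) ≤ r ^ (j + k) :=
      pow_le_pow_of_le_one hr0 hr1.le (by omega)
    have hA := one_sub_sq_mul_norm_one_sub_hip_le (h.norm_lt_one _) (h.norm_lt_one _)
      (h.phd_le (j + k)) h.a_lt_one (hB (j + k))
      (Nat.add_right_comm j 1 k ▸ (hB (j + 1 + k)).trans (by gcongr))
    rw [← Nat.add_right_comm j 1 k, mul_comm, ← le_div_iff₀ hσ] at hA
    calc _ ≤ B * r ^ (j + k) / (1 - a ^ 2) := hA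
      _ = B * r ^ k / (1 - a ^ 2) * r ^ j := by rw [pow_add]; ring
  set B₁ := B / ((1 - a ^ 2) * (1 - √r) ^ 2)
  have hp_le (k : ℕ) : ‖(1 : ℂ) - hip (Z k) p‖ ≤ B₁ * r ^ k := by
    have htail := norm_one_sub_hip_le_of_le_geometric (fun j => h.norm_le_one (j + k)) hr0 hr1
      (hstep k) ((tendsto_add_atTop_iff_nat k).2 hp)
    rw [zero_add] at htail
    exact htail.trans_eq (by rw [div_div, mul_div_right_comm])
  have hu := horoLevel_pos (h.norm_lt_one 0) h.norm_p_le_one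
  refine ⟨B₁ ^ 2 / horoLevel p (Z 0), fun k => ?_⟩
  have hlevel := le_pow_mul_of_le_mul_succ h.c_pos.le h.horoLevel_le 0 k
  have hmul := horoLevel_mul_one_sub_norm_sq (p := p) (h.norm_lt_one (k + 0))
  have hx := one_sub_norm_sq_pos (h.norm_lt_one k)
  rw [add_zero] at hlevel hmul
  rw [div_mul_eq_mul_div, le_div_iff₀ hu, mul_pow]
  calc (1 - ‖Z k‖ ^ 2) * horoLevel p (Z 0)
      ≤ (1 - ‖Z k‖ ^ 2) * (c ^ k * horoLevel p (Z k)) := mul_le_mul_of_nonneg_left hlevel hx.le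
    _ = c ^ k * ‖(1 : ℂ) - hip (Z k) p‖ ^ 2 := by rw [← hmul]; ring
    _ ≤ c ^ k * (B₁ * r ^ k) ^ 2 := by
        gcongr
        exacts [pow_nonneg h.c_pos.le k, hp_le k]
    _ = B₁ ^ 2 * (c ^ k * r ^ k) * r ^ k := by ring
    _ ≤ B₁ ^ 2 * (c ^ k * r ^ k) := mul_le_of_le_one_right
        (mul_nonneg (sq_nonneg _) (mul_nonneg (pow_nonneg h.c_pos.le k) (pow_nonneg hr0 k)))
        (pow_le_one₀ hr0 hr1.le)

lemma ne_of_tendsto (h : IsJuliaBackwardOrbit p c a Z) (hq : Tendsto Z atTop (𝓝 q)) :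
    q ≠ p := by
  intro hqp
  rw [hqp] at hq
  have hu := horoLevel_pos (h.norm_lt_one 0) h.norm_p_le_one
  have hfast (n : ℕ) : ∃ B : ℝ, ∀ k, 1 - ‖Z k‖ ^ 2 ≤ B * (c ^ (n + 1)) ^ k := by
    induction n with
    | zero =>
      refine ⟨4 / horoLevel p (Z 0), fun k => ?_⟩
      rw [zero_add, pow_one, div_mul_eq_mul_div, le_div_iff₀ hu]
      exact h.one_sub_norm_sq_mul_horoLevel_le 0 k
    | succ n ih =>
      obtain ⟨B, hB⟩ := ih
      rw [pow_succ']
      exact h.exists_one_sub_norm_sq_le_mul_pow hq (pow_nonneg h.c_pos.le _)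
        (pow_lt_one₀ h.c_pos.le h.c_lt_one (Nat.succ_ne_zero n)) hB
  set K := 4 / (1 - a ^ 2)
  have hK : 0 < K := div_pos four_pos h.one_sub_sq_pos
  have hslow (k : ℕ) : 1 - ‖Z 0‖ ^ 2 ≤ K ^ k * (1 - ‖Z k‖ ^ 2) := by
    simpa using le_pow_mul_of_le_mul_succ hK.le (fun i => one_sub_norm_sq_le_of_phd_le
      (h.norm_lt_one i) (h.norm_lt_one (i + 1)) (h.phd_le i) h.a_lt_one) 0 k
  obtain ⟨n, hn⟩ := exists_pow_lt_of_lt_one (inv_pos.2 hK) h.c_lt_one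
  obtain ⟨B, hB⟩ := hfast n
  have hρ0 : 0 ≤ K * c ^ (n + 1) := mul_nonneg hK.le (pow_nonneg h.c_pos.le _)
  have hρ1 : K * c ^ (n + 1) < 1 :=
    calc K * c ^ (n + 1) < K * K⁻¹ := mul_lt_mul_of_pos_left
          ((pow_le_pow_of_le_one h.c_pos.le h.c_lt_one.le n.le_succ).trans_lt hn) hK
      _ = 1 := mul_inv_cancel₀ hK.ne'
  have hgeom := (tendsto_pow_atTop_nhds_zero_of_lt_one hρ0 hρ1).const_mul B
  rw [mul_zero] at hgeom
  refine (one_sub_norm_sq_pos (h.norm_lt_one 0)).not_ge (ge_of_tendsto' hgeom fun k => ?_)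
  calc 1 - ‖Z 0‖ ^ 2 ≤ K ^ k * (1 - ‖Z k‖ ^ 2) := hslow k
    _ ≤ K ^ k * (B * (c ^ (n + 1)) ^ k) := by gcongr; exact hB k
    _ = B * (K * c ^ (n + 1)) ^ k := by ring

lemma exists_forall_mem_koranyi (h : IsJuliaBackwardOrbit p c a Z)
    (hq : Tendsto Z atTop (𝓝 q)) : ∃ M : ℝ, 1 < M ∧ ∀ k, Z k ∈ koranyi q M := by
  have hqp := norm_one_sub_hip_ne_zero (h.norm_eq_one_of_tendsto hq).le h.norm_p_le_one
    (h.ne_of_tendsto hq)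
  have hcont : Continuous fun W => ‖(1 : ℂ) - hip W p‖ := by unfold hip; fun_prop
  obtain ⟨D, hD⟩ := (((hcont.tendsto q).comp hq).pow 2 |>.inv₀ (pow_ne_zero 2 hqp)).bddAbove_range
  have hD' (k : ℕ) : (‖(1 : ℂ) - hip (Z k) p‖ ^ 2)⁻¹ ≤ D := hD ⟨k, rfl⟩
  have hD0 : 0 ≤ D := (inv_nonneg.2 (sq_nonneg _)).trans (hD' 0)
  set C₀ := 4 / ((1 - a ^ 2) * (1 - √c) ^ 2)
  have hC₀ : 0 ≤ C₀ := div_nonneg four_pos.le (mul_nonneg h.one_sub_sq_pos.le (sq_nonneg _))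
  refine ⟨2 * C₀ * D + 2, by nlinarith [mul_nonneg hC₀ hD0], fun k => ⟨h.norm_lt_one k, ?_⟩⟩
  have hx := one_sub_norm_sq_pos (h.norm_lt_one k)
  have hv : 0 < ‖(1 : ℂ) - hip (Z k) p‖ ^ 2 := by
    simpa [horoLevel, div_pos_iff_of_pos_right hx] using
      horoLevel_pos (h.norm_lt_one k) h.norm_p_le_one
  have hest := h.norm_one_sub_hip_mul_horoLevel_le hq k
  rw [horoLevel, mul_div_assoc', div_le_iff₀ hx, ← le_div_iff₀ hv, mul_div_assoc,
    div_eq_mul_inv] at hest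
  have hgap : 1 - ‖Z k‖ ^ 2 ≤ 2 * (1 - ‖Z k‖) := by nlinarith [norm_nonneg (Z k)]
  have hZk : 0 < 1 - ‖Z k‖ := by linarith [h.norm_lt_one k]
  calc ‖(1 : ℂ) - hip (Z k) q‖ ≤ C₀ * ((1 - ‖Z k‖ ^ 2) * (‖(1 : ℂ) - hip (Z k) p‖ ^ 2)⁻¹) := hest
    _ ≤ C₀ * (2 * (1 - ‖Z k‖) * D) := by gcongr; exact hD' k
    _ < (2 * C₀ * D + 2) * (1 - ‖Z k‖) := by nlinarith

end IsJuliaBackwardOrbit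

theorem stmt1_general {N : ℕ}
    (f : EuclideanSpace ℂ (Fin N) → EuclideanSpace ℂ (Fin N))
    (p : EuclideanSpace ℂ (Fin N)) (hp : ‖p‖ = 1)
    (c : ℝ) (hc0 : 0 < c) (hc1 : c < 1)
    (hJulia : ∀ R : ℝ, 0 < R → f '' horo p R ⊆ horo p (c * R))
    (Z : ℕ → EuclideanSpace ℂ (Fin N)) (hZ : ∀ k, Z k ∈ unitBall N)
    (hback : ∀ k, f (Z (k + 1)) = Z k)
    (a : ℝ) (ha1 : a < 1)
    (hstep : ∀ k, phd (Z k) (Z (k + 1)) ≤ a) :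
    ∃ (q : EuclideanSpace ℂ (Fin N)) (M : ℝ), ‖q‖ = 1 ∧ q ≠ p ∧ 1 < M ∧
      Tendsto Z atTop (𝓝 q) ∧ ∀ k, Z k ∈ koranyi q M := by
  have h : IsJuliaBackwardOrbit p c a Z :=
    { norm_lt_one := hZ, norm_p_le_one := hp.le, c_pos := hc0, c_lt_one := hc1, a_lt_one := ha1
      horoLevel_le := fun k => hback k ▸ horoLevel_apply_le hJulia hc0 (hZ (k + 1))
      phd_le := hstep }
  obtain ⟨q, hq⟩ := cauchySeq_tendsto_of_complete h.cauchySeq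
  obtain ⟨M, hM, hK⟩ := h.exists_forall_mem_koranyi hq
  exact ⟨q, M, h.norm_eq_one_of_tendsto hq, h.ne_of_tendsto hq, hM, hq, hK⟩

/-- under the same hypotheses as Statement 0, the limit point `q ∈ ∂B^N`
exists with `q ≠ p`, and moreover the sequence stays in a Koranyi region `K(q,M)`
for some amplitude `M > 1`. -/
theorem stmt1 {N : ℕ} (hN : 1 ≤ N)
    (f : EuclideanSpace ℂ (Fin N) → EuclideanSpace ℂ (Fin N))
    (hmaps : Set.MapsTo f (unitBall N) (unitBall N))
    (hhol : DifferentiableOn ℂ f (unitBall N))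
    (p : EuclideanSpace ℂ (Fin N)) (hp : ‖p‖ = 1)
    (c : ℝ) (hc0 : 0 < c) (hc1 : c < 1)
    (hJulia : ∀ R : ℝ, 0 < R → f '' horo p R ⊆ horo p (c * R))
    (Z : ℕ → EuclideanSpace ℂ (Fin N)) (hZ : ∀ k, Z k ∈ unitBall N)
    (hback : ∀ k, f (Z (k + 1)) = Z k)
    (a : ℝ) (ha0 : 0 < a) (ha1 : a < 1)
    (hstep : ∀ k, phd (Z k) (Z (k + 1)) ≤ a) :
    ∃ (q : EuclideanSpace ℂ (Fin N)) (M : ℝ), ‖q‖ = 1 ∧ q ≠ p ∧ 1 < M ∧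
      Tendsto Z atTop (𝓝 q) ∧ ∀ k, Z k ∈ koranyi q M :=
  stmt1_general f p hp c hc0 hc1 hJulia Z hZ hback a ha1 hstep
end
end

section
/- Let N ≥ 1, α > 1 and a = (α−1)/(α+1). Let (z_n, w_n) ∈ H^N (n ≥ 0) be a sequence with heights t_n := Re z_n − ‖w_n‖² satisfying: (z_n,w_n) → (0,0) as n → ∞; d((z_n,w_n),(z_{n+1},w_{n+1})) ≤ a for all n; and liminf_{n→∞} t_n/t_{n+1} ≥ α. Then: t_n/t_{n+1} → α; Re z_n / t_n → 1; Im z_n / t_n → 0; ‖w_n‖² / t_n → 0. In particular the sequence is special, i.e. ‖w_n‖² / Re z_n → 0. -/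
/-!
Write `t, t̃` for the heights of consecutive points and `ρ = z + conj z̃ - 2⟨w, w̃⟩`, so that
`Re ρ = t + t̃ + ‖w - w̃‖²`. The step bound `d ≤ (α-1)/(α+1)` says `α |ρ|² ≤ (α+1)² t t̃`, which
expands to `2 (t + t̃) ‖w - w̃‖² + (Im ρ)² ≤ δ t t̃` with `δ = α + α⁻¹ - (r + r⁻¹)`, `r = t/t̃`.
Hence `r ≤ α` at every step, so the liminf hypothesis forces `r → α` and `δ → 0`, and the heights
decay geometrically. Then `‖w_k - w_{k+1}‖ = o(√t_k)` and `Im z_k - Im z_{k+1} = o(t_k)`; as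
`w_k → 0` and `Im z_k → 0`, summing the geometric tails gives `‖w_k‖ = o(√t_k)` and
`Im z_k = o(t_k)`.
-/
noncomputable section

open Filter Topology

/-- The Siegel domain `H^N = {(z,w) ∈ ℂ × ℂ^{N−1} : Re z > ‖w‖²}` (here `n = N − 1`). -/
def siegel (n : ℕ) : Set (ℂ × EuclideanSpace ℂ (Fin n)) := {Z | ‖Z.2‖ ^ 2 < Z.1.re}

/-- The height `t(z,w) = Re z − ‖w‖²` of a point of the Siegel domain. -/
def ht {n : ℕ} (Z : ℂ × EuclideanSpace ℂ (Fin n)) : ℝ := Z.1.re - ‖Z.2‖ ^ 2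

/-- The Hermitian inner product `⟨w,w̃⟩ = Σ_j w_j * conj (w̃_j)` of the paper
(which is `inner w̃ w` in Mathlib's conjugate-linear-in-the-first-slot convention). -/
def hip' {n : ℕ} (w w' : EuclideanSpace ℂ (Fin n)) : ℂ := inner ℂ w' w

/-- The pseudo-hyperbolic distance on the Siegel domain: the number `d ∈ [0,1)` with
`d² = 1 − 4·t(z,w)·t(z̃,w̃)/|z + conj z̃ − 2⟨w,w̃⟩|²`. -/
def sphd {n : ℕ} (Z W : ℂ × EuclideanSpace ℂ (Fin n)) : ℝ :=
  Real.sqrt (1 - 4 * ht Z * ht W / ‖Z.1 + (starRingEnd ℂ) W.1 - 2 * hip' Z.2 W.2‖ ^ 2)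

open Asymptotics

lemma le_pow_mul_of_succ_le {τ : ℕ → ℝ} {γ : ℝ} (hγ : 0 ≤ γ) {k : ℕ}
    (h : ∀ j, k ≤ j → τ (j + 1) ≤ γ * τ j) (m : ℕ) : τ (k + m) ≤ γ ^ m * τ k := by
  induction m with
  | zero => simp
  | succ m ih =>
    calc τ (k + (m + 1)) ≤ γ * τ (k + m) := h _ (Nat.le_add_right k m)
      _ ≤ γ * (γ ^ m * τ k) := mul_le_mul_of_nonneg_left ih hγ
      _ = γ ^ (m + 1) * τ k := by ring

lemma norm_le_of_norm_sub_succ_le {E : Type*} [NormedAddCommGroup E] {f : ℕ → E} {τ : ℕ → ℝ}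
    {c γ : ℝ} (hf : Tendsto f atTop (𝓝 0)) (hc : 0 ≤ c) (hγ0 : 0 ≤ γ) (hγ1 : γ < 1) {k : ℕ}
    (hτ : ∀ j, k ≤ j → τ (j + 1) ≤ γ * τ j)
    (hsub : ∀ j, k ≤ j → ‖f j - f (j + 1)‖ ≤ c * τ j) :
    ‖f k‖ ≤ c * τ k / (1 - γ) := by
  have hshift : Tendsto (fun m => f (k + m)) atTop (𝓝 0) :=
    hf.comp (tendsto_atTop_atTop_of_monotone (fun _ _ h => by omega) fun m => ⟨m, by omega⟩)
  have hgeom (m : ℕ) : dist (f (k + m)) (f (k + (m + 1))) ≤ c * τ k * γ ^ m := by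
    rw [dist_eq_norm]
    calc ‖f (k + m) - f (k + m + 1)‖ ≤ c * τ (k + m) := hsub _ (Nat.le_add_right k m)
      _ ≤ c * (γ ^ m * τ k) := mul_le_mul_of_nonneg_left (le_pow_mul_of_succ_le hγ0 hτ m) hc
      _ = c * τ k * γ ^ m := by ring
  simpa using dist_le_of_le_geometric_of_tendsto₀ γ (c * τ k) hγ1 hgeom hshift

theorem Asymptotics.IsLittleO.of_sub_succ {E : Type*} [NormedAddCommGroup E] {f : ℕ → E}
    {τ : ℕ → ℝ} {γ : ℝ} (hf : Tendsto f atTop (𝓝 0)) (hγ : γ < 1) (hτ0 : ∀ j, 0 ≤ τ j)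
    (hτ : ∀ᶠ j in atTop, τ (j + 1) ≤ γ * τ j) (hsub : (fun j => f j - f (j + 1)) =o[atTop] τ) :
    f =o[atTop] τ := by
  set γ' := max γ 0
  have hγ'1 : 0 < 1 - γ' := by simp [γ', hγ]
  refine isLittleO_iff.2 fun ε hε => ?_
  obtain ⟨K, hK⟩ := eventually_atTop.1 <|
    (isLittleO_iff.1 hsub (mul_pos hε hγ'1)).and hτ
  refine eventually_atTop.2 ⟨K, fun k hk => ?_⟩
  have hbound := norm_le_of_norm_sub_succ_le hf (mul_pos hε hγ'1).le (le_max_right γ 0)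
    (max_lt hγ zero_lt_one)
    (fun j hj => (hK j (hk.trans hj)).2.trans
      (mul_le_mul_of_nonneg_right (le_max_left _ _) (hτ0 j)))
    (fun j hj => by simpa [abs_of_nonneg (hτ0 j)] using (hK j (hk.trans hj)).1)
  rw [Real.norm_of_nonneg (hτ0 k)]
  calc ‖f k‖ ≤ ε * (1 - γ') * τ k / (1 - γ') := hbound
    _ = ε * τ k := by field_simp

lemma Asymptotics.isLittleO_of_norm_le_mul {α E F : Type*} [Norm E] [SeminormedAddGroup F]
    {l : Filter α} {f : α → E} {g : α → F} {ε : α → ℝ} (hε : Tendsto ε l (𝓝 0))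
    (h : ∀ᶠ x in l, ‖f x‖ ≤ ε x * ‖g x‖) : f =o[l] g :=
  isLittleO_iff.2 fun c hc => by
    filter_upwards [h, hε.eventually (eventually_le_nhds hc)] with x hx hεx
    exact hx.trans (mul_le_mul_of_nonneg_right hεx (norm_nonneg _))

lemma tendsto_of_le_liminf_of_forall_le {u : ℕ → ℝ} {a b : ℝ} (hb : ∀ k, b ≤ u k)
    (ha : ∀ k, u k ≤ a) (hinf : a ≤ liminf u atTop) : Tendsto u atTop (𝓝 a) :=
  tendsto_of_le_liminf_of_limsup_le hinf
    (limsup_le_of_le (isBoundedUnder_of ⟨b, hb⟩).isCoboundedUnder_le (Eventually.of_forall ha))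
    (isBoundedUnder_of ⟨a, ha⟩) (isBoundedUnder_of ⟨b, hb⟩)

lemma le_of_add_inv_le_add_inv {r α : ℝ} (hr : 0 < r) (hα : 1 ≤ α)
    (h : r + r⁻¹ ≤ α + α⁻¹) : r ≤ α := by
  by_contra! hlt
  have hα0 : 0 < α := by linarith
  have key : r + r⁻¹ - (α + α⁻¹) = (r - α) * (r * α - 1) / (r * α) := by
    field_simp; ring
  have : 0 < (r - α) * (r * α - 1) / (r * α) := by
    apply div_pos (mul_pos (by linarith) (by nlinarith)) (by positivity)
  linarith

def siegelKernel {n : ℕ} (Z W : ℂ × EuclideanSpace ℂ (Fin n)) : ℂ :=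
  Z.1 + (starRingEnd ℂ) W.1 - 2 * hip' Z.2 W.2

-- For `r > 0` and `α ≥ 1` this is nonnegative exactly when `α⁻¹ ≤ r ≤ α`.
def ratioDefect (α r : ℝ) : ℝ := α + α⁻¹ - (r + r⁻¹)

section Siegel

variable {n : ℕ} {Z W : ℂ × EuclideanSpace ℂ (Fin n)}

lemma ht_pos (hZ : Z ∈ siegel n) : 0 < ht Z := sub_pos.2 hZ

lemma siegelKernel_re (Z W : ℂ × EuclideanSpace ℂ (Fin n)) :
    (siegelKernel Z W).re = ht Z + ht W + ‖Z.2 - W.2‖ ^ 2 := by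
  have hsub : ‖Z.2 - W.2‖ ^ 2 = ‖Z.2‖ ^ 2 - 2 * (inner ℂ W.2 Z.2 : ℂ).re + ‖W.2‖ ^ 2 := by
    rw [@norm_sub_sq ℂ, ← inner_re_symm]
    simp
  simp only [siegelKernel, hip', ht, hsub, Complex.sub_re, Complex.add_re, Complex.conj_re,
    Complex.mul_re, Complex.re_ofNat, Complex.im_ofNat]
  ring

lemma siegelKernel_im (Z W : ℂ × EuclideanSpace ℂ (Fin n)) :
    (siegelKernel Z W).im = Z.1.im - W.1.im - 2 * (hip' Z.2 W.2).im := by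
  simp [siegelKernel, sub_eq_add_neg]

lemma mul_sq_norm_siegelKernel_le {α : ℝ} (hα : 0 < α) (h : sphd Z W ≤ (α - 1) / (α + 1)) :
    α * ‖siegelKernel Z W‖ ^ 2 ≤ (α + 1) ^ 2 * (ht Z * ht W) := by
  have hsq : 1 - 4 * ht Z * ht W / ‖siegelKernel Z W‖ ^ 2 ≤ ((α - 1) / (α + 1)) ^ 2 :=
    (Real.sqrt_le_iff.1 h).2
  have hgap : ((α - 1) / (α + 1)) ^ 2 = 1 - 4 * α / (α + 1) ^ 2 := by
    field_simp; ring
  rw [hgap] at hsq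
  have hpos : 0 < ‖siegelKernel Z W‖ ^ 2 := by
    by_contra! h0
    have h0' : ‖siegelKernel Z W‖ ^ 2 = 0 := le_antisymm h0 (sq_nonneg _)
    rw [h0', div_zero] at hsq
    have : 0 < 4 * α / (α + 1) ^ 2 := by positivity
    linarith
  have := (div_le_div_iff₀ (by positivity) hpos).1 (by linarith : 4 * α / (α + 1) ^ 2 ≤
    4 * ht Z * ht W / ‖siegelKernel Z W‖ ^ 2)
  linarith

lemma mul_sq_norm_sub_add_sq_im_le_ratioDefect {α : ℝ} (hα : 0 < α) (hZ : Z ∈ siegel n)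
    (hW : W ∈ siegel n) (h : sphd Z W ≤ (α - 1) / (α + 1)) :
    2 * (ht Z + ht W) * ‖Z.2 - W.2‖ ^ 2 + (siegelKernel Z W).im ^ 2 ≤
      ratioDefect α (ht Z / ht W) * (ht Z * ht W) := by
  have hZ0 := ht_pos hZ
  have hW0 := ht_pos hW
  have hkernel := mul_sq_norm_siegelKernel_le hα h
  rw [Complex.sq_norm, Complex.normSq_apply, siegelKernel_re] at hkernel
  have hdefect : ratioDefect α (ht Z / ht W) * (ht Z * ht W) * α =
      (α ^ 2 + 1) * (ht Z * ht W) - α * ht Z ^ 2 - α * ht W ^ 2 := by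
    unfold ratioDefect; field_simp; ring
  rw [← mul_le_mul_iff_of_pos_right hα, hdefect]
  nlinarith [mul_nonneg hα.le (sq_nonneg ‖Z.2 - W.2‖)]

lemma ratioDefect_nonneg {α : ℝ} (hα : 0 < α) (hZ : Z ∈ siegel n) (hW : W ∈ siegel n)
    (h : sphd Z W ≤ (α - 1) / (α + 1)) : 0 ≤ ratioDefect α (ht Z / ht W) := by
  have hstep := mul_sq_norm_sub_add_sq_im_le_ratioDefect hα hZ hW h
  have hZ0 := ht_pos hZ
  have hW0 := ht_pos hW
  have hwterm : 0 ≤ 2 * (ht Z + ht W) * ‖Z.2 - W.2‖ ^ 2 := by positivity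
  refine nonneg_of_mul_nonneg_left ?_ (mul_pos hZ0 hW0)
  linarith [sq_nonneg (siegelKernel Z W).im]

lemma ht_div_ht_le {α : ℝ} (hα : 1 < α) (hZ : Z ∈ siegel n) (hW : W ∈ siegel n)
    (h : sphd Z W ≤ (α - 1) / (α + 1)) : ht Z / ht W ≤ α :=
  le_of_add_inv_le_add_inv (div_pos (ht_pos hZ) (ht_pos hW)) hα.le
    (sub_nonneg.1 (ratioDefect_nonneg (by linarith) hZ hW h))

lemma sq_norm_snd_sub_le {α : ℝ} (hα : 0 < α) (hZ : Z ∈ siegel n) (hW : W ∈ siegel n)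
    (h : sphd Z W ≤ (α - 1) / (α + 1)) :
    ‖Z.2 - W.2‖ ^ 2 ≤ ratioDefect α (ht Z / ht W) * ht Z := by
  have hstep := mul_sq_norm_sub_add_sq_im_le_ratioDefect hα hZ hW h
  have hZ0 := ht_pos hZ
  have hW0 := ht_pos hW
  refine le_of_mul_le_mul_right ?_ hW0
  nlinarith [sq_nonneg ‖Z.2 - W.2‖, sq_nonneg (siegelKernel Z W).im]

lemma sq_siegelKernel_im_le {α : ℝ} (hα : 0 < α) (hZ : Z ∈ siegel n) (hW : W ∈ siegel n)
    (h : sphd Z W ≤ (α - 1) / (α + 1)) :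
    (siegelKernel Z W).im ^ 2 ≤ ratioDefect α (ht Z / ht W) * (ht Z * ht W) := by
  have hstep := mul_sq_norm_sub_add_sq_im_le_ratioDefect hα hZ hW h
  nlinarith [sq_nonneg ‖Z.2 - W.2‖, ht_pos hZ, ht_pos hW]

end Siegel

lemma tendsto_ratioDefect {ι : Type*} {l : Filter ι} {α : ℝ} {r : ι → ℝ} (hα : α ≠ 0)
    (h : Tendsto r l (𝓝 α)) : Tendsto (fun i => ratioDefect α (r i)) l (𝓝 0) := by
  simpa [ratioDefect] using (tendsto_const_nhds (x := α + α⁻¹)).sub (h.add (h.inv₀ hα))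

lemma exists_lt_one_eventually_succ_le_mul {τ : ℕ → ℝ} {α : ℝ} (hτ : ∀ k, 0 < τ k)
    (hα : 1 < α) (h : Tendsto (fun k => τ k / τ (k + 1)) atTop (𝓝 α)) :
    ∃ γ < 1, ∀ᶠ k in atTop, τ (k + 1) ≤ γ * τ k := by
  obtain ⟨β, hβ1, hβα⟩ := exists_between hα
  refine ⟨β⁻¹, inv_lt_one_of_one_lt₀ hβ1, ?_⟩
  filter_upwards [h.eventually (eventually_gt_nhds hβα)] with k hk
  rw [lt_div_iff₀ (hτ (k + 1))] at hk
  rw [inv_mul_eq_div, le_div_iff₀ (by linarith)]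
  linarith

section Sequence

variable {n : ℕ} {α : ℝ} {Z : ℕ → ℂ × EuclideanSpace ℂ (Fin n)}

lemma tendsto_ht_div_ht_succ (hα : 1 < α) (hZ : ∀ k, Z k ∈ siegel n)
    (hstep : ∀ k, sphd (Z k) (Z (k + 1)) ≤ (α - 1) / (α + 1))
    (hliminf : α ≤ liminf (fun k => ht (Z k) / ht (Z (k + 1))) atTop) :
    Tendsto (fun k => ht (Z k) / ht (Z (k + 1))) atTop (𝓝 α) :=
  tendsto_of_le_liminf_of_forall_le (fun k => (div_pos (ht_pos (hZ k)) (ht_pos (hZ (k + 1)))).le)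
    (fun k => ht_div_ht_le hα (hZ k) (hZ (k + 1)) (hstep k)) hliminf

variable (hα : 1 < α) (hZ : ∀ k, Z k ∈ siegel n)
  (hstep : ∀ k, sphd (Z k) (Z (k + 1)) ≤ (α - 1) / (α + 1))
  (hratio : Tendsto (fun k => ht (Z k) / ht (Z (k + 1))) atTop (𝓝 α))
include hα hZ hstep hratio

lemma snd_isLittleO_sqrt_ht (hw : Tendsto (fun k => (Z k).2) atTop (𝓝 0)) :
    (fun k => (Z k).2) =o[atTop] fun k => √(ht (Z k)) := by
  have hα0 : 0 < α := by linarith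
  obtain ⟨γ, hγ, hdecay⟩ :=
    exists_lt_one_eventually_succ_le_mul (fun k => ht_pos (hZ k)) hα hratio
  have hsqrt_decay : ∀ᶠ k in atTop, √(ht (Z (k + 1))) ≤ √γ * √(ht (Z k)) := by
    filter_upwards [hdecay] with k hk
    rw [← Real.sqrt_mul' γ (ht_pos (hZ k)).le]
    exact Real.sqrt_le_sqrt hk
  have hsub : (fun k => (Z k).2 - (Z (k + 1)).2) =o[atTop] fun k => √(ht (Z k)) := by
    refine isLittleO_of_norm_le_mul (by simpa using (tendsto_ratioDefect hα0.ne' hratio).sqrt)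
      (Eventually.of_forall fun k => ?_)
    rw [Real.norm_of_nonneg (Real.sqrt_nonneg _), ← Real.sqrt_mul' _ (ht_pos (hZ k)).le,
      ← abs_norm]
    exact Real.abs_le_sqrt (sq_norm_snd_sub_le hα0 (hZ k) (hZ (k + 1)) (hstep k))
  exact hsub.of_sub_succ hw ((Real.sqrt_lt' one_pos).2 (by simpa using hγ))
    (fun k => Real.sqrt_nonneg _) hsqrt_decay

lemma im_fst_isLittleO_ht (hw : Tendsto (fun k => (Z k).2) atTop (𝓝 0))
    (him : Tendsto (fun k => (Z k).1.im) atTop (𝓝 0)) :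
    (fun k => (Z k).1.im) =o[atTop] fun k => ht (Z k) := by
  have hα0 : 0 < α := by linarith
  have ht0 k := (ht_pos (hZ k)).le
  obtain ⟨γ, hγ, hdecay⟩ :=
    exists_lt_one_eventually_succ_le_mul (fun k => ht_pos (hZ k)) hα hratio
  have hmono : ∀ᶠ k in atTop, ht (Z (k + 1)) ≤ ht (Z k) :=
    hdecay.mono fun k hk => hk.trans (by nlinarith [ht_pos (hZ k)])
  have hkernel : (fun k => (siegelKernel (Z k) (Z (k + 1))).im) =o[atTop] fun k => ht (Z k) := by
    refine isLittleO_of_norm_le_mul (by simpa using (tendsto_ratioDefect hα0.ne' hratio).sqrt) ?_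
    filter_upwards [hmono] with k hk
    rw [Real.norm_eq_abs, Real.norm_of_nonneg (ht0 k), ← Real.sqrt_sq (ht0 k),
      ← Real.sqrt_mul' _ (sq_nonneg _), Real.sqrt_sq (ht0 k)]
    refine Real.abs_le_sqrt ((sq_siegelKernel_im_le hα0 (hZ k) (hZ (k + 1)) (hstep k)).trans ?_)
    rw [sq]
    exact mul_le_mul_of_nonneg_left (mul_le_mul_of_nonneg_left hk (ht0 k))
      (ratioDefect_nonneg hα0 (hZ k) (hZ (k + 1)) (hstep k))
  have hw' := snd_isLittleO_sqrt_ht hα hZ hstep hratio hw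
  have hw'_succ : (fun k => (Z (k + 1)).2) =o[atTop] fun k => √(ht (Z (k + 1))) :=
    hw'.comp_tendsto (tendsto_add_atTop_nat 1)
  have hprod : (fun k => ‖(Z k).2‖ * ‖(Z (k + 1)).2‖) =o[atTop] fun k => ht (Z k) := by
    refine (hw'.norm_left.mul hw'_succ.norm_left).trans_isBigO (IsBigO.of_bound' ?_)
    filter_upwards [hmono] with k hk
    rw [Real.norm_of_nonneg (mul_nonneg (Real.sqrt_nonneg _) (Real.sqrt_nonneg _)),
      Real.norm_of_nonneg (ht0 k)]
    calc √(ht (Z k)) * √(ht (Z (k + 1))) ≤ √(ht (Z k)) * √(ht (Z k)) :=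
          mul_le_mul_of_nonneg_left (Real.sqrt_le_sqrt hk) (Real.sqrt_nonneg _)
      _ = ht (Z k) := Real.mul_self_sqrt (ht0 k)
  have hinner : (fun k => (hip' (Z k).2 (Z (k + 1)).2).im) =o[atTop] fun k => ht (Z k) := by
    refine (IsBigO.of_bound' (Eventually.of_forall fun k => ?_)).trans_isLittleO hprod
    rw [Real.norm_eq_abs, Real.norm_of_nonneg (by positivity), mul_comm]
    exact (Complex.abs_im_le_norm _).trans (norm_inner_le_norm _ _)
  have hsub : (fun k => (Z k).1.im - (Z (k + 1)).1.im) =o[atTop] fun k => ht (Z k) := by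
    refine (hkernel.add (hinner.const_mul_left 2)).congr_left fun k => ?_
    rw [siegelKernel_im]
    ring
  exact hsub.of_sub_succ him hγ ht0 hdecay

end Sequence

/-- if a sequence in the Siegel domain tends to `0`, has pseudo-hyperbolic
steps bounded by `a = (α−1)/(α+1)`, and `liminf t_n/t_{n+1} ≥ α`, then
`t_n/t_{n+1} → α`, `Re z_n/t_n → 1`, `Im z_n/t_n → 0`, `‖w_n‖²/t_n → 0`; in particular
the sequence is special: `‖w_n‖²/Re z_n → 0`. -/
theorem stmt11 {n : ℕ} (α : ℝ) (hα : 1 < α)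
    (Z : ℕ → ℂ × EuclideanSpace ℂ (Fin n)) (hZ : ∀ k, Z k ∈ siegel n)
    (hlim : Tendsto Z atTop (𝓝 0))
    (hstep : ∀ k, sphd (Z k) (Z (k + 1)) ≤ (α - 1) / (α + 1))
    (hliminf : α ≤ Filter.liminf (fun k => ht (Z k) / ht (Z (k + 1))) atTop) :
    Tendsto (fun k => ht (Z k) / ht (Z (k + 1))) atTop (𝓝 α) ∧
    Tendsto (fun k => (Z k).1.re / ht (Z k)) atTop (𝓝 1) ∧
    Tendsto (fun k => (Z k).1.im / ht (Z k)) atTop (𝓝 0) ∧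
    Tendsto (fun k => ‖(Z k).2‖ ^ 2 / ht (Z k)) atTop (𝓝 0) ∧
    Tendsto (fun k => ‖(Z k).2‖ ^ 2 / (Z k).1.re) atTop (𝓝 0) := by
  have hratio := tendsto_ht_div_ht_succ hα hZ hstep hliminf
  have hw : Tendsto (fun k => (Z k).2) atTop (𝓝 0) := by simpa using hlim.snd_nhds
  have him : Tendsto (fun k => (Z k).1.im) atTop (𝓝 0) := by
    simpa [Function.comp_def] using (Complex.continuous_im.tendsto 0).comp hlim.fst_nhds
  have hnorm : Tendsto (fun k => ‖(Z k).2‖ ^ 2 / ht (Z k)) atTop (𝓝 0) :=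
    (((snd_isLittleO_sqrt_ht hα hZ hstep hratio hw).norm_left.pow two_pos).congr_right
      fun k => Real.sq_sqrt (ht_pos (hZ k)).le).tendsto_div_nhds_zero
  have hre : Tendsto (fun k => (Z k).1.re / ht (Z k)) atTop (𝓝 1) := by
    have h1 : Tendsto (fun k => 1 + ‖(Z k).2‖ ^ 2 / ht (Z k)) atTop (𝓝 1) := by
      simpa using tendsto_const_nhds.add hnorm
    refine h1.congr fun k => ?_
    rw [← same_add_div (ht_pos (hZ k)).ne', ht, sub_add_cancel]
  refine ⟨hratio, hre, (im_fst_isLittleO_ht hα hZ hstep hratio hw him).tendsto_div_nhds_zero,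
    hnorm, ?_⟩
  simpa using (hnorm.div hre one_ne_zero).congr fun k =>
    div_div_div_cancel_right₀ (ht_pos (hZ k)).ne' _ _
end
end
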